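/- Let M be a minimal trim partial DFA of a reversible language L such that every zig-zag state of M is reversible. Then there is a finite bound n, computable from M, such that every reduced reversible automaton recognizing L has at most n states; consequently there are only finitely many reduced reversible automata recognizing L up to isomorphism. -/

import Mathlib

/-- A partial deterministic finite automaton (partial DFA). -/
structure PDFA (Q A : Type) where
  step : Q → A → Option Q
  init : Q
  acc : Q → Prop

namespace PDFA

variable {Q A : Type}

/-- Extended (partial) transition function on words. -/
def run (M : PDFA Q A) : Q → List A → Option Q
  | q, [] => some q
  | q, a :: w => (M.step q a).bind fun q' => M.run q' w

/-- The language accepted from state `q`. -/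
def LangFrom (M : PDFA Q A) (q : Q) : Set (List A) :=
  {w | ∃ q', M.run q w = some q' ∧ M.acc q'}

/-- The language of the automaton. -/
def Lang (M : PDFA Q A) : Set (List A) := M.LangFrom M.init

/-- An automaton is reversible if distinct states are never merged by a letter. -/
def Reversible (M : PDFA Q A) : Prop :=
  ∀ p q a r, M.step p a = some r → M.step q a = some r → p = q

/-- `Θ` is a congruence: an equivalence relation saturating the final states and
compatible with the (partial) action, including definedness. -/
def IsCongruence (M : PDFA Q A) (Θ : Q → Q → Prop) : Prop :=
  Equivalence Θ ∧
  (∀ p q, Θ p q → (M.acc p ↔ M.acc q)) ∧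
  (∀ p q a, Θ p q → ((M.step p a).isSome ↔ (M.step q a).isSome) ∧
    ∀ p' q', M.step p a = some p' → M.step q a = some q' → Θ p' q')

/-- A reversible congruence: a congruence whose factor automaton is reversible,
equivalently `p·a Θ q·a` (both defined) implies `p Θ q`. -/
def IsRevCongruence (M : PDFA Q A) (Θ : Q → Q → Prop) : Prop :=
  M.IsCongruence Θ ∧
  ∀ p q a p' q', M.step p a = some p' → M.step q a = some q' → Θ p' q' → Θ p q

def Reachable (M : PDFA Q A) (q : Q) : Prop := ∃ w, M.run M.init w = some q

def Productive (M : PDFA Q A) (q : Q) : Prop := ∃ w, w ∈ M.LangFrom q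

/-- A trim automaton: all states reachable and productive. -/
def Trim (M : PDFA Q A) : Prop := ∀ q, M.Reachable q ∧ M.Productive q

/-- The set of access words of a state. -/
def AccessWords (M : PDFA Q A) (q : Q) : Set (List A) :=
  {w | M.run M.init w = some q}

/-- An `∞`-state: reachable by infinitely many words. -/
def InfState (M : PDFA Q A) (q : Q) : Prop := (M.AccessWords q).Infinite

/-- A `1`-state: reachable by exactly one word. -/
def OneState (M : PDFA Q A) (q : Q) : Prop := ∃! w, w ∈ M.AccessWords q

/-- A `⊕`-state: neither a `1`-state nor an `∞`-state. -/
def PlusState (M : PDFA Q A) (q : Q) : Prop := ¬ M.OneState q ∧ ¬ M.InfState q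

/-- An irreversible state: reachable from two distinct states by a common word. -/
def IrrevState (M : PDFA Q A) (r : Q) : Prop :=
  ∃ p₁ p₂ u, p₁ ≠ p₂ ∧ M.run p₁ u = some r ∧ M.run p₂ u = some r

/-- Zig-zag states: the least set containing the `∞`-states, closed under defined
forward transitions, and containing every `⊕`-state with a transition into the set. -/
inductive ZigZag (M : PDFA Q A) : Q → Prop
  | inf {q} : M.InfState q → ZigZag M q
  | fwd {q a q'} : ZigZag M q → M.step q a = some q' → ZigZag M q'
  | back {q a q'} : M.PlusState q → M.step q a = some q' → ZigZag M q' → ZigZag M q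

/-- A reduced reversible automaton: trim, reversible, with no nontrivial reversible
congruence. -/
def ReducedReversible (M : PDFA Q A) : Prop :=
  M.Trim ∧ M.Reversible ∧ ∀ Θ, M.IsRevCongruence Θ → ∀ p q, Θ p q → p = q

/-- `n`-fold repetition of a word. -/
def wpow (w : List A) (n : ℕ) : List A := (List.replicate n w).flatten

end PDFA

/-!
Let `N` be a reduced reversible automaton with the same language as `M`. Since `M` is minimal,
every state `q` of `N` determines the state `φ q` of `M` reached by any access word of `q`,
and `φ` is a morphism of automata. Identifying two states of `N` with the same zig-zag image is
a reversible congruence, so, `N` being reduced, `φ` is injective above zig-zag states. Every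
other state `p` of `M` has finitely many access words, and distinct states of `N` above `p`
have distinct access words. Hence `N` has at most
`∑ p, (1 + #(access words of p))` states.
-/

namespace PDFA

variable {Q P A : Type}

theorem run_append (M : PDFA Q A) (q : Q) (w u : List A) :
    M.run q (w ++ u) = (M.run q w).bind fun r => M.run r u := by
  induction w generalizing q with
  | nil => simp [run]
  | cons a w ih =>
    simp only [List.cons_append, run]
    cases M.step q a <;> simp [ih]

theorem run_singleton (M : PDFA Q A) (q : Q) (a : A) : M.run q [a] = M.step q a := by
  cases h : M.step q a <;> simp [run, h]

theorem langFrom_eq_of_run_init (M : PDFA Q A) {w : List A} {q : Q}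
    (h : M.run M.init w = some q) : M.LangFrom q = {u | w ++ u ∈ M.Lang} := by
  ext u
  simp [LangFrom, Lang, run_append, h]

theorem acc_iff_nil_mem_langFrom (M : PDFA Q A) (q : Q) : M.acc q ↔ [] ∈ M.LangFrom q := by
  simp [LangFrom, run]

theorem exists_run_init_of_lang_eq {N : PDFA Q A} {M : PDFA P A} (hlang : N.Lang = M.Lang)
    {v : List A} {q : Q} (hv : N.run N.init v = some q) (hq : N.Productive q) :
    ∃ p, M.run M.init v = some p := by
  obtain ⟨u, hu⟩ := hq
  have hmem : v ++ u ∈ M.Lang := by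
    rw [N.langFrom_eq_of_run_init hv] at hu
    exact hlang ▸ hu
  obtain ⟨r, hr, -⟩ := hmem
  rw [run_append] at hr
  cases h : M.run M.init v with
  | none => simp [h] at hr
  | some p => exact ⟨p, rfl⟩

theorem exists_map_of_lang_eq {N : PDFA Q A} {M : PDFA P A} (hN : N.Trim)
    (hM : ∀ p p' : P, M.LangFrom p = M.LangFrom p' → p = p') (hlang : N.Lang = M.Lang) :
    ∃ φ : Q → P, ∀ v q, N.run N.init v = some q → M.run M.init v = some (φ q) := by
  have hmap : ∀ q, ∃ p, ∀ v, N.run N.init v = some q → M.run M.init v = some p := by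
    intro q
    obtain ⟨v₀, hv₀⟩ := (hN q).1
    obtain ⟨p, hp⟩ := exists_run_init_of_lang_eq hlang hv₀ (hN q).2
    refine ⟨p, fun v hv => ?_⟩
    obtain ⟨p', hp'⟩ := exists_run_init_of_lang_eq hlang hv (hN q).2
    rw [hp', hM p' p]
    rw [M.langFrom_eq_of_run_init hp, M.langFrom_eq_of_run_init hp', ← hlang,
      ← N.langFrom_eq_of_run_init hv, ← N.langFrom_eq_of_run_init hv₀]
  choose φ hφ using hmap
  exact ⟨φ, fun v q => hφ q v⟩

section StateMap

variable {N : PDFA Q A} {M : PDFA P A} {φ : Q → P}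
  (hφ : ∀ v q, N.run N.init v = some q → M.run M.init v = some (φ q))
include hφ

theorem langFrom_eq_langFrom_map (hlang : N.Lang = M.Lang) {q : Q} (hq : N.Reachable q) :
    N.LangFrom q = M.LangFrom (φ q) := by
  obtain ⟨v, hv⟩ := hq
  rw [N.langFrom_eq_of_run_init hv, M.langFrom_eq_of_run_init (hφ v q hv), hlang]

theorem step_map {q q' : Q} {a : A} (hq : N.Reachable q) (h : N.step q a = some q') :
    M.step (φ q) a = some (φ q') := by
  obtain ⟨v, hv⟩ := hq
  have hv' : N.run N.init (v ++ [a]) = some q' := by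
    simp [run_append, hv, run_singleton, h]
  simpa [run_append, hφ v q hv, run_singleton] using hφ _ _ hv'

theorem acc_iff_acc_map (hlang : N.Lang = M.Lang) {q : Q} (hq : N.Reachable q) :
    N.acc q ↔ M.acc (φ q) := by
  rw [acc_iff_nil_mem_langFrom, acc_iff_nil_mem_langFrom, langFrom_eq_langFrom_map hφ hlang hq]

theorem isSome_step_of_isSome_step_map (hlang : N.Lang = M.Lang) (hM : M.Trim) {q : Q}
    (hq : N.Reachable q) {a : A} (h : (M.step (φ q) a).isSome) : (N.step q a).isSome := by
  obtain ⟨p, hp⟩ := Option.isSome_iff_exists.mp h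
  obtain ⟨u, hu⟩ := (hM p).2
  have hmem : a :: u ∈ N.LangFrom q := by
    rw [langFrom_eq_langFrom_map hφ hlang hq]
    simpa [LangFrom, run, hp] using hu
  obtain ⟨r, hr, -⟩ := hmem
  cases hs : N.step q a <;> simp_all [run]

theorem eq_of_map_eq_of_oneState (hN : N.Trim) {q q' : Q} (he : φ q = φ q')
    (hone : M.OneState (φ q)) : q = q' := by
  obtain ⟨v, hv⟩ := (hN q).1
  obtain ⟨v', hv'⟩ := (hN q').1
  obtain ⟨w, -, hw⟩ := hone
  have hvv' : v = v' := (hw v (hφ v q hv)).trans (hw v' (he ▸ hφ v' q' hv')).symm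
  subst hvv'
  exact Option.some.inj (hv.symm.trans hv')

theorem card_fiber_le_ncard_accessWords [Fintype Q] [DecidableEq P] (hN : N.Trim) (p : P)
    (hfin : (M.AccessWords p).Finite) :
    (Finset.univ.filter fun q => φ q = p).card ≤ (M.AccessWords p).ncard := by
  choose acc hacc using fun q => (hN q).1
  rw [← Set.ncard_coe_finset]
  refine Set.ncard_le_ncard_of_injOn acc ?_ ?_ hfin
  · intro q hq
    simp only [Finset.coe_filter, Finset.mem_univ, true_and, Set.mem_ofPred_eq] at hq
    exact hq ▸ hφ _ q (hacc q)
  · intro q _ q' _ he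
    exact Option.some.inj ((hacc q).symm.trans (he ▸ hacc q'))

end StateMap

def zigZagKernel (M : PDFA P A) (φ : Q → P) (r r' : Q) : Prop :=
  r = r' ∨ (φ r = φ r' ∧ M.ZigZag (φ r))

theorem zigZagKernel_equivalence (M : PDFA P A) (φ : Q → P) : Equivalence (zigZagKernel M φ) where
  refl _ := Or.inl rfl
  symm := by
    rintro r r' (rfl | ⟨he, hz⟩)
    · exact Or.inl rfl
    · exact Or.inr ⟨he.symm, he ▸ hz⟩
  trans := by
    rintro r r' r'' (rfl | ⟨he, hz⟩) (rfl | ⟨he', hz'⟩)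
    · exact Or.inl rfl
    · exact Or.inr ⟨he', hz'⟩
    · exact Or.inr ⟨he, hz⟩
    · exact Or.inr ⟨he.trans he', hz⟩

section ZigZagKernel

variable {N : PDFA Q A} {M : PDFA P A} {φ : Q → P}
  (hφ : ∀ v q, N.run N.init v = some q → M.run M.init v = some (φ q))
  (hN : N.Trim)
include hφ hN

theorem isCongruence_zigZagKernel (hM : M.Trim) (hlang : N.Lang = M.Lang) :
    N.IsCongruence (zigZagKernel M φ) := by
  refine ⟨zigZagKernel_equivalence M φ, ?_, ?_⟩
  · rintro r r' (rfl | ⟨he, -⟩)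
    · rfl
    · rw [acc_iff_acc_map hφ hlang (hN r).1, acc_iff_acc_map hφ hlang (hN r').1, he]
  · rintro r r' a (rfl | ⟨he, hz⟩)
    · refine ⟨Iff.rfl, fun p' q' h₁ h₂ => Or.inl (Option.some.inj (h₁.symm.trans h₂))⟩
    have hdef : ∀ {s s'}, φ s = φ s' → N.Reachable s → N.Reachable s' →
        (N.step s a).isSome → (N.step s' a).isSome := by
      intro s s' he hs hs' h
      obtain ⟨t, ht⟩ := Option.isSome_iff_exists.mp h
      refine isSome_step_of_isSome_step_map hφ hlang hM hs' ?_
      rw [← he, step_map hφ hs ht]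
      rfl
    refine ⟨⟨hdef he (hN r).1 (hN r').1, hdef he.symm (hN r').1 (hN r).1⟩, ?_⟩
    intro p' q' h₁ h₂
    have hm₁ := step_map hφ (hN r).1 h₁
    have hm₂ := step_map hφ (hN r').1 h₂
    rw [← he, hm₁] at hm₂
    exact Or.inr ⟨Option.some.inj hm₂, ZigZag.fwd hz hm₁⟩

/-- A letter merging two distinct `φ`-images would make the zig-zag target irreversible; a
common image that is neither a `1`- nor an `∞`-state is a `⊕`-state, hence zig-zag by the
backward closure. -/
theorem zigZagKernel_of_step (hNrev : N.Reversible)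
    (hZrev : ∀ r : P, M.ZigZag r → ¬ M.IrrevState r) {r r' p' q' : Q} {a : A}
    (h₁ : N.step r a = some p') (h₂ : N.step r' a = some q')
    (h : zigZagKernel M φ p' q') : zigZagKernel M φ r r' := by
  rcases h with rfl | ⟨he, hz⟩
  · exact Or.inl (hNrev r r' a p' h₁ h₂)
  have hm₁ := step_map hφ (hN r).1 h₁
  have hm₂ := step_map hφ (hN r').1 h₂
  have hrr' : φ r = φ r' := by
    by_contra hne
    refine hZrev (φ p') hz ⟨φ r, φ r', [a], hne, ?_, ?_⟩
    · rw [run_singleton, hm₁]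
    · rw [run_singleton, hm₂, he]
  by_cases hone : M.OneState (φ r)
  · exact Or.inl (eq_of_map_eq_of_oneState hφ hN hrr' hone)
  by_cases hinf : M.InfState (φ r)
  · exact Or.inr ⟨hrr', ZigZag.inf hinf⟩
  · exact Or.inr ⟨hrr', ZigZag.back ⟨hone, hinf⟩ hm₁ hz⟩

theorem isRevCongruence_zigZagKernel (hM : M.Trim) (hlang : N.Lang = M.Lang)
    (hNrev : N.Reversible) (hZrev : ∀ r : P, M.ZigZag r → ¬ M.IrrevState r) :
    N.IsRevCongruence (zigZagKernel M φ) :=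
  ⟨isCongruence_zigZagKernel hφ hN hM hlang,
    fun _ _ _ _ _ h₁ h₂ h => zigZagKernel_of_step hφ hN hNrev hZrev h₁ h₂ h⟩

end ZigZagKernel

end PDFA

open PDFA in
theorem stmt7_general {Qm A : Type} [Fintype Qm] (M : PDFA Qm A)
    (hMtrim : M.Trim)
    (hMmin : ∀ p q : Qm, M.LangFrom p = M.LangFrom q → p = q)
    (hZrev : ∀ r : Qm, M.ZigZag r → ¬ M.IrrevState r) :
    ∃ n : ℕ, ∀ (Q : Type) (_ : Fintype Q) (N : PDFA Q A),
      N.ReducedReversible → N.Lang = M.Lang → Fintype.card Q ≤ n := by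
  classical
  refine ⟨∑ p : Qm, (1 + (M.AccessWords p).ncard), fun Q _ N ⟨hN, hNrev, hNred⟩ hlang => ?_⟩
  obtain ⟨φ, hφ⟩ := exists_map_of_lang_eq hN hMmin hlang
  have hinj : ∀ q q', φ q = φ q' → M.ZigZag (φ q) → q = q' := fun q q' he hz =>
    hNred _ (isRevCongruence_zigZagKernel hφ hN hMtrim hlang hNrev hZrev) q q' (Or.inr ⟨he, hz⟩)
  rw [← Finset.card_univ, Finset.card_eq_sum_card_fiberwise (f := φ) (t := Finset.univ)
    (fun _ _ => Finset.mem_univ _)]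
  refine Finset.sum_le_sum fun p _ => ?_
  by_cases hz : M.ZigZag p
  · have : (Finset.univ.filter fun q => φ q = p).card ≤ 1 := Finset.card_le_one.mpr
      fun q hq q' hq' => by
        simp only [Finset.mem_filter, Finset.mem_univ, true_and] at hq hq'
        exact hinj q q' (hq.trans hq'.symm) (hq ▸ hz)
    omega
  · have hfin : (M.AccessWords p).Finite := Set.not_infinite.mp fun h => hz (ZigZag.inf h)
    have := card_fiber_le_ncard_accessWords hφ hN p hfin
    omega

/-- If `M` is the minimal trim partial DFA of a reversible language and
every zig-zag state of `M` is reversible, then there is a finite bound `n` such that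
every reduced reversible automaton recognizing the language has at most `n` states
(hence only finitely many up to isomorphism). -/
theorem stmt7 {Qm A : Type} [Fintype Qm] (M : PDFA Qm A)
    (hMtrim : M.Trim)
    (hMmin : ∀ p q : Qm, M.LangFrom p = M.LangFrom q → p = q)
    (hLrev : ∃ (Q₀ : Type) (_ : Fintype Q₀) (N₀ : PDFA Q₀ A),
      N₀.Reversible ∧ N₀.Lang = M.Lang)
    (hZrev : ∀ r : Qm, M.ZigZag r → ¬ M.IrrevState r) :
    ∃ n : ℕ, ∀ (Q : Type) (_ : Fintype Q) (N : PDFA Q A),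
      N.ReducedReversible → N.Lang = M.Lang → Fintype.card Q ≤ n :=
  stmt7_general M hMtrim hMmin hZrev
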